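/- arXiv:1710.01796 — 3 statements merged into one kernel-verified Lean document; each statement's English description precedes it below -/
import Mathlib

section
/- Let V be a real Banach space, ζ : [c,d] → V Lipschitz continuous with the right derivative ζ'ᵣ(t) := lim_{h↘0} (ζ(t+h) − ζ(t))/h existing for every t ∈ [c,d), and suppose ζ'ᵣ is strongly measurable. Define ζ⋆(t) := ζ(c) + ∫_c^t ζ'ᵣ(τ) dτ (Bochner integral). Then ζ(t) = ζ⋆(t) for all t ∈ [c,d]. -/
/-!
A curve that is `L`-Lipschitz has right difference quotients of norm at most `L`, so its right
derivative is bounded by `L`; being strongly measurable, it is then integrable on `[c, t]`, and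
the fundamental theorem of calculus for right derivatives of continuous functions gives
`∫_c^t ζ'ᵣ = ζ t - ζ c`.
-/

open MeasureTheory Filter Topology Set

theorem hasDerivWithinAt_Ioi_iff_tendsto_slope_zero_right {E : Type*} [NormedAddCommGroup E]
    [NormedSpace ℝ E] {f : ℝ → E} {f' : E} {x : ℝ} :
    HasDerivWithinAt f f' (Ioi x) x ↔
      Tendsto (fun t ↦ t⁻¹ • (f (x + t) - f x)) (𝓝[>] 0) (𝓝 f') := by
  have : 𝓝[>] x = Filter.map (fun t ↦ x + t) (𝓝[>] 0) := by simp
  rw [hasDerivWithinAt_iff_tendsto_slope' self_notMem_Ioi, this, tendsto_map'_iff]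
  simp [slope, Function.comp_def]

theorem LipschitzOnWith.norm_slope_le {𝕜 E : Type*} [NontriviallyNormedField 𝕜]
    [NormedAddCommGroup E] [NormedSpace 𝕜 E] {f : 𝕜 → E} {C : NNReal} {s : Set 𝕜} {x y : 𝕜}
    (hf : LipschitzOnWith C f s) (hx : x ∈ s) (hy : y ∈ s) : ‖slope f x y‖ ≤ C := by
  rcases eq_or_ne y x with rfl | hne
  · simp
  rw [slope_def_module, norm_smul, norm_inv, inv_mul_le_iff₀ (norm_pos_iff.2 (sub_ne_zero.2 hne)),
    mul_comm]
  exact hf.norm_sub_le hy hx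

theorem LipschitzOnWith.norm_le_of_hasDerivWithinAt_Ioi {E : Type*} [NormedAddCommGroup E]
    [NormedSpace ℝ E] {f : ℝ → E} {f' : E} {C : NNReal} {s : Set ℝ} {x : ℝ}
    (hf : LipschitzOnWith C f s) (hs : s ∈ 𝓝[≥] x) (hderiv : HasDerivWithinAt f f' (Ioi x) x) :
    ‖f'‖ ≤ C := by
  rw [hasDerivWithinAt_iff_tendsto_slope' self_notMem_Ioi] at hderiv
  have hx : x ∈ s := mem_of_mem_nhdsWithin self_mem_Ici hs
  refine le_of_tendsto hderiv.norm ?_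
  filter_upwards [nhdsWithin_mono x Ioi_subset_Ici_self hs] with y hy
  exact hf.norm_slope_le hx hy

theorem intervalIntegrable_of_norm_le_on_Ico {E : Type*} [NormedAddCommGroup E] {f : ℝ → E}
    {a b C : ℝ} (hab : a ≤ b) (hf : AEStronglyMeasurable f) (hC : ∀ x ∈ Ico a b, ‖f x‖ ≤ C) :
    IntervalIntegrable f volume a b := by
  rw [intervalIntegrable_iff_integrableOn_Ico_of_le hab]
  exact Measure.integrableOn_of_bounded measure_Ico_lt_top.ne hf
    (ae_restrict_of_forall_mem measurableSet_Ico hC)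

theorem stmt_3_general (V : Type*) [NormedAddCommGroup V] [NormedSpace ℝ V] [CompleteSpace V]
    (c d : ℝ) (ζ ζ' : ℝ → V) (L : NNReal)
    (hlip : LipschitzOnWith L ζ (Set.Icc c d))
    (hderiv : ∀ t ∈ Set.Ico c d,
      Tendsto (fun h : ℝ => h⁻¹ • (ζ (t + h) - ζ t)) (𝓝[>] 0) (𝓝 (ζ' t)))
    (hmeas : StronglyMeasurable ζ') :
    ∀ t ∈ Set.Icc c d, ζ t = ζ c + ∫ τ in c..t, ζ' τ := by
  have hright : ∀ s ∈ Ico c d, HasDerivWithinAt ζ (ζ' s) (Ioi s) s := fun s hs ↦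
    hasDerivWithinAt_Ioi_iff_tendsto_slope_zero_right.2 (hderiv s hs)
  have hbound : ∀ s ∈ Ico c d, ‖ζ' s‖ ≤ L := fun s hs ↦
    hlip.norm_le_of_hasDerivWithinAt_Ioi (Icc_mem_nhdsGE_of_mem hs) (hright s hs)
  intro t ht
  rw [intervalIntegral.integral_eq_sub_of_hasDeriv_right_of_le ht.1
    (hlip.continuousOn.mono (Icc_subset_Icc_right ht.2))
    (fun s hs ↦ hright s ⟨hs.1.le, hs.2.trans_le ht.2⟩)
    (intervalIntegrable_of_norm_le_on_Ico ht.1 hmeas.aestronglyMeasurable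
      fun s hs ↦ hbound s ⟨hs.1, hs.2.trans_le ht.2⟩), add_sub_cancel]

/-- A Lipschitz curve `ζ : [c,d] → V` in a Banach space, whose right derivative `ζ'ᵣ(t)`
exists at every `t ∈ [c,d)` and is strongly measurable, is recovered from it by the
Bochner integral: `ζ(t) = ζ(c) + ∫_c^t ζ'ᵣ(τ) dτ` for all `t ∈ [c,d]`. -/
theorem stmt_3 (V : Type*) [NormedAddCommGroup V] [NormedSpace ℝ V] [CompleteSpace V]
    (c d : ℝ) (hcd : c < d) (ζ ζ' : ℝ → V) (L : NNReal)
    (hlip : LipschitzOnWith L ζ (Set.Icc c d))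
    (hderiv : ∀ t ∈ Set.Ico c d,
      Tendsto (fun h : ℝ => h⁻¹ • (ζ (t + h) - ζ t)) (𝓝[>] 0) (𝓝 (ζ' t)))
    (hmeas : StronglyMeasurable ζ') :
    ∀ t ∈ Set.Icc c d, ζ t = ζ c + ∫ τ in c..t, ζ' τ :=
  stmt_3_general V c d ζ ζ' L hlip hderiv hmeas
end

section
/- Let V be a real separable Banach space, 𝒜 : D(𝒜) → 2^V a densely defined m-accretive operator whose associated semigroup T_𝒜 is domain invariant and admits an infinitesimal generator 𝒜°. Then for every v ∈ V, the map t ↦ T_𝒜(t)v is locally Lipschitz continuous on (0,∞), differentiable almost everywhere, and its derivative satisfies T_𝒜'(t)v = −𝒜° T_𝒜(t)v for almost every t ∈ (0,∞). -/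
/-!
For `t ≥ s > 0` we have `T t v = T (t - s) (T s v)` with `T s v` in the domain, so the orbit is
Lipschitz on compact subintervals of `(0, ∞)`, and the generator property gives it the right
derivative `-A0 (T t v)` at every `t > 0`. Lipschitz continuity alone would not give a.e.
differentiability in a general Banach space; instead, a right derivative is Borel measurable and
bounded by the Lipschitz constant, so the orbit is the primitive of its right derivative, and the
Lebesgue differentiation theorem upgrades the right derivative to a two-sided one almost everywhere.
-/

open MeasureTheory Filter Topology Set

section RightDerivative

variable {E : Type*} [NormedAddCommGroup E] [NormedSpace ℝ E]

theorem HasDerivWithinAt.norm_le_of_lipschitzOn_Ioi {f : ℝ → E} {f' : E} {x : ℝ} {s : Set ℝ}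
    {C : NNReal} (hf : HasDerivWithinAt f f' (Ioi x) x) (hs : s ∈ 𝓝[>] x) (hx : x ∈ s)
    (hlip : LipschitzOnWith C f s) : ‖f'‖ ≤ C := by
  have hslope : Tendsto (slope f x) (𝓝[>] x) (𝓝 f') :=
    (hasDerivWithinAt_iff_tendsto_slope' self_notMem_Ioi).1 hf
  refine le_of_tendsto hslope.norm ?_
  filter_upwards [hs, self_mem_nhdsWithin] with y hy hxy
  have hpos : 0 < y - x := sub_pos.2 hxy
  rw [slope_def_module, norm_smul, norm_inv, Real.norm_eq_abs, abs_of_pos hpos,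
    inv_mul_le_iff₀ hpos, mul_comm, ← Real.norm_of_nonneg hpos.le]
  exact hlip.norm_sub_le hy hx

variable [CompleteSpace E]

theorem LipschitzOnWith.ae_hasDerivAt_of_hasDerivWithinAt_Ioi {f f' : ℝ → E} {a b : ℝ}
    {C : NNReal} (hlip : LipschitzOnWith C f (Icc a b))
    (hderiv : ∀ t ∈ Ioo a b, HasDerivWithinAt f (f' t) (Ioi t) t) :
    ∀ᵐ t, t ∈ Ioo a b → HasDerivAt f (f' t) t := by
  rcases lt_or_ge b a with hba | hab
  · exact Eventually.of_forall fun t ht => absurd (ht.1.trans ht.2) (not_lt.2 hba.le)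
  have hint : IntervalIntegrable f' volume a b := by
    rw [intervalIntegrable_iff_integrableOn_Ioo_of_le hab]
    refine IntegrableOn.of_bound measure_Ioo_lt_top ?_ C ?_
    · refine (aestronglyMeasurable_derivWithin_Ici f _).congr ?_
      filter_upwards [ae_restrict_mem measurableSet_Ioo] with t ht
      exact (hasDerivWithinAt_Ioi_iff_Ici.1 (hderiv t ht)).derivWithin (uniqueDiffWithinAt_Ici t)
    · filter_upwards [ae_restrict_mem measurableSet_Ioo] with t ht
      exact (hderiv t ht).norm_le_of_lipschitzOn_Ioi
        (mem_nhdsWithin_of_mem_nhds (Icc_mem_nhds ht.1 ht.2)) (Ioo_subset_Icc_self ht) hlip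
  have hftc : ∀ t ∈ Ioo a b, f t = f a + ∫ s in a..t, f' s := by
    intro t ht
    rw [intervalIntegral.integral_eq_sub_of_hasDeriv_right_of_le ht.1.le
      (hlip.continuousOn.mono (Icc_subset_Icc_right ht.2.le))
      (fun s hs => hderiv s ⟨hs.1, hs.2.trans ht.2⟩)
      (hint.mono_set (uIcc_subset_uIcc left_mem_uIcc (Icc_subset_uIcc (Ioo_subset_Icc_self ht))))]
    abel
  filter_upwards [hint.ae_hasDerivAt_integral] with t hprim ht
  have hmem : t ∈ uIcc a b := Icc_subset_uIcc (Ioo_subset_Icc_self ht)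
  exact ((hprim hmem a left_mem_uIcc).const_add (f a)).congr_of_eventuallyEq
    (eventually_of_mem (Ioo_mem_nhds ht.1 ht.2) hftc)

theorem ae_hasDerivAt_of_hasDerivWithinAt_Ioi {f f' : ℝ → E} {a : ℝ}
    (hlip : ∀ s r : ℝ, a < s → s ≤ r → ∃ L : NNReal, LipschitzOnWith L f (Icc s r))
    (hderiv : ∀ t > a, HasDerivWithinAt f (f' t) (Ioi t) t) :
    ∀ᵐ t ∂(volume.restrict (Ioi a)), HasDerivAt f (f' t) t := by
  -- cover `(a, ∞)` by the countably many intervals with rational endpoints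
  have hrat : ∀ q r : ℚ, ∀ᵐ t, a < q → t ∈ Ioo (q : ℝ) r → HasDerivAt f (f' t) t := by
    intro q r
    by_cases hqr : a < q ∧ (q : ℝ) ≤ r
    · obtain ⟨L, hL⟩ := hlip q r hqr.1 hqr.2
      filter_upwards [hL.ae_hasDerivAt_of_hasDerivWithinAt_Ioi
        fun t ht => hderiv t (hqr.1.trans ht.1)] with t ht _ using ht
    · exact Eventually.of_forall fun t haq ht => absurd ⟨haq, (ht.1.trans ht.2).le⟩ hqr
  rw [ae_restrict_iff' measurableSet_Ioi]
  filter_upwards [ae_all_iff.2 fun q => ae_all_iff.2 (hrat q)] with t ht hat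
  obtain ⟨q, haq, hqt⟩ := exists_rat_btwn (mem_Ioi.1 hat)
  obtain ⟨r, htr, -⟩ := exists_rat_btwn (lt_add_one t)
  exact ht q r haq ⟨hqt, htr⟩

end RightDerivative

section Semigroup

variable {V : Type*} {T : ℝ → V → V}

theorem semigroup_apply_eq_apply_sub
    (hsem : ∀ s ≥ (0:ℝ), ∀ t ≥ (0:ℝ), ∀ u, T (s + t) u = T t (T s u))
    {s t : ℝ} (hs : 0 ≤ s) (hst : s ≤ t) (v : V) : T t v = T (t - s) (T s v) := by
  rw [← hsem s hs (t - s) (sub_nonneg.2 hst), add_sub_cancel]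

theorem lipschitzOnWith_orbit_Icc [PseudoEMetricSpace V] (𝒜 : V → Set V)
    (hsem : ∀ s ≥ (0:ℝ), ∀ t ≥ (0:ℝ), ∀ u, T (s + t) u = T t (T s u))
    (hdominv : ∀ t > (0:ℝ), ∀ u : V, (𝒜 (T t u)).Nonempty)
    (hLip : ∀ u : V, (𝒜 u).Nonempty → ∀ b > (0:ℝ), ∃ L : NNReal,
      LipschitzOnWith L (fun t => T t u) (Icc 0 b))
    (v : V) {s r : ℝ} (hs : 0 < s) (hsr : s ≤ r) :
    ∃ L : NNReal, LipschitzOnWith L (fun t => T t v) (Icc s r) := by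
  obtain ⟨L, hL⟩ := hLip (T s v) (hdominv s hs v) r (hs.trans_le hsr)
  refine ⟨L, fun t ht t' ht' => ?_⟩
  have hmem : ∀ τ ∈ Icc s r, τ - s ∈ Icc 0 r := fun τ hτ =>
    ⟨sub_nonneg.2 hτ.1, by linarith [hτ.2]⟩
  simpa only [← semigroup_apply_eq_apply_sub hsem hs.le ht.1,
    ← semigroup_apply_eq_apply_sub hsem hs.le ht'.1, edist_sub_right]
    using hL (hmem t ht) (hmem t' ht')

theorem hasDerivWithinAt_orbit_Ioi [NormedAddCommGroup V] [NormedSpace ℝ V] (𝒜 : V → Set V)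
    (hsem : ∀ s ≥ (0:ℝ), ∀ t ≥ (0:ℝ), ∀ u, T (s + t) u = T t (T s u))
    (hdominv : ∀ t > (0:ℝ), ∀ u : V, (𝒜 (T t u)).Nonempty)
    (A0 : V → V)
    (hgen : ∀ u : V, (𝒜 u).Nonempty →
      Tendsto (fun h : ℝ => h⁻¹ • (T h u - u)) (𝓝[>] 0) (𝓝 (-(A0 u))))
    (v : V) {t : ℝ} (ht : 0 < t) :
    HasDerivWithinAt (fun s => T s v) (-(A0 (T t v))) (Ioi t) t := by
  have hshift : Tendsto (fun s : ℝ => s - t) (𝓝[>] t) (𝓝[>] 0) :=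
    tendsto_nhdsWithin_iff.2
      ⟨((continuous_sub_right t).tendsto' t 0 (sub_self t)).mono_left nhdsWithin_le_nhds,
        eventually_nhdsWithin_of_forall fun s (hs : t < s) => mem_Ioi.2 (sub_pos.2 hs)⟩
  rw [hasDerivWithinAt_iff_tendsto_slope' self_notMem_Ioi]
  refine ((hgen _ (hdominv t ht v)).comp hshift).congr' ?_
  filter_upwards [self_mem_nhdsWithin] with s hs
  rw [Function.comp_apply, slope_def_module, ← semigroup_apply_eq_apply_sub hsem ht.le hs.le]

end Semigroup

theorem stmt_4_general (V : Type*) [NormedAddCommGroup V] [NormedSpace ℝ V] [CompleteSpace V]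
    (𝒜 : V → Set V)
    (T : ℝ → V → V)
    -- semigroup property
    (hsem : ∀ s ≥ (0:ℝ), ∀ t ≥ (0:ℝ), ∀ u, T (s + t) u = T t (T s u))
    -- domain invariance
    (hdominv : ∀ t > (0:ℝ), ∀ u : V, (𝒜 (T t u)).Nonempty)
    -- infinitesimal generator
    (A0 : V → V)
    (hgen : ∀ u : V, (𝒜 u).Nonempty →
      Tendsto (fun h : ℝ => h⁻¹ • (T h u - u)) (𝓝[>] 0) (𝓝 (-(A0 u))))
    -- Lipschitz property of orbits starting in the domain on bounded intervals
    (hLip : ∀ u : V, (𝒜 u).Nonempty → ∀ b > (0:ℝ), ∃ L : NNReal,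
      LipschitzOnWith L (fun t => T t u) (Set.Icc 0 b)) :
    ∀ v : V,
      (∀ s r : ℝ, 0 < s → s ≤ r → ∃ L : NNReal,
        LipschitzOnWith L (fun t => T t v) (Set.Icc s r)) ∧
      (∀ᵐ t ∂(volume.restrict (Set.Ioi (0:ℝ))),
        HasDerivAt (fun s => T s v) (-(A0 (T t v))) t) := by
  intro v
  have hlip : ∀ s r : ℝ, 0 < s → s ≤ r → ∃ L : NNReal,
      LipschitzOnWith L (fun t => T t v) (Icc s r) :=
    fun _ _ hs hsr => lipschitzOnWith_orbit_Icc 𝒜 hsem hdominv hLip v hs hsr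
  exact ⟨hlip, ae_hasDerivAt_of_hasDerivWithinAt_Ioi hlip
    fun _ ht => hasDerivWithinAt_orbit_Ioi 𝒜 hsem hdominv A0 hgen v ht⟩

/-- Let `𝒜` be a densely defined m-accretive (multivalued) operator on a real separable
Banach space `V`, whose semigroup `T` is domain invariant and admits an infinitesimal
generator `A0`. Then for every `v ∈ V` the orbit `t ↦ T t v` is locally Lipschitz on
`(0,∞)` and differentiable a.e. with derivative `−A0 (T t v)`. -/
theorem stmt_4 (V : Type*) [NormedAddCommGroup V] [NormedSpace ℝ V] [CompleteSpace V]
    [TopologicalSpace.SeparableSpace V]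
    (𝒜 : V → Set V)
    -- accretivity
    (hacc : ∀ α : ℝ, 0 < α → ∀ v₁ w₁ v₂ w₂ : V, w₁ ∈ 𝒜 v₁ → w₂ ∈ 𝒜 v₂ →
      ‖v₁ - v₂‖ ≤ ‖v₁ - v₂ + α • (w₁ - w₂)‖)
    -- range condition (m-accretivity)
    (hrange : ∀ α : ℝ, 0 < α → ∀ u : V, ∃ v w, w ∈ 𝒜 v ∧ v + α • w = u)
    -- densely defined
    (hdense : Dense {v : V | (𝒜 v).Nonempty})
    (T : ℝ → V → V)
    -- contraction property of the semigroup
    (hcontr : ∀ t ≥ (0:ℝ), ∀ u w : V, ‖T t u - T t w‖ ≤ ‖u - w‖)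
    -- joint continuity
    (hjoint : ContinuousOn (fun p : ℝ × V => T p.1 p.2) (Set.Ici 0 ×ˢ Set.univ))
    -- semigroup property
    (hT0 : ∀ u, T 0 u = u)
    (hsem : ∀ s ≥ (0:ℝ), ∀ t ≥ (0:ℝ), ∀ u, T (s + t) u = T t (T s u))
    -- domain invariance
    (hdominv : ∀ t > (0:ℝ), ∀ u : V, (𝒜 (T t u)).Nonempty)
    -- infinitesimal generator
    (A0 : V → V)
    (hgen : ∀ u : V, (𝒜 u).Nonempty →
      Tendsto (fun h : ℝ => h⁻¹ • (T h u - u)) (𝓝[>] 0) (𝓝 (-(A0 u))))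
    (hgenmem : ∀ u : V, (𝒜 u).Nonempty → A0 u ∈ 𝒜 u)
    (hgen0 : ∀ u : V, ¬ (𝒜 u).Nonempty → A0 u = 0)
    -- Lipschitz property of orbits starting in the domain on bounded intervals
    (hLip : ∀ u : V, (𝒜 u).Nonempty → ∀ b > (0:ℝ), ∃ L : NNReal,
      LipschitzOnWith L (fun t => T t u) (Set.Icc 0 b)) :
    ∀ v : V,
      (∀ s r : ℝ, 0 < s → s ≤ r → ∃ L : NNReal,
        LipschitzOnWith L (fun t => T t v) (Set.Icc s r)) ∧
      (∀ᵐ t ∂(volume.restrict (Set.Ioi (0:ℝ))),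
        HasDerivAt (fun s => T s v) (-(A0 (T t v))) t) :=
  stmt_4_general V 𝒜 T hsem hdominv A0 hgen hLip
end

section
/- In the setting of the piecewise semigroup construction: with 𝕏(t) := T(t−αₘ)Xₘ and 𝕐(t) := T(t−αₘ)Yₘ for t ∈ [αₘ, αₘ₊₁), where (Xₘ) and (Yₘ) are generated by (x,(ηₖ)) and (y,(ζₖ)), one has for all t ≥ 0: ‖𝕏(t) − 𝕐(t)‖ ≤ ‖x − y‖ + Σ_{k: αₖ ≤ t} ‖ηₖ − ζₖ‖. In particular the map (x, (ηₖ)) ↦ 𝕏 is Lipschitz with constant 1 in this sense. -/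
open Filter Topology

/-! Between jump times both processes are moved by the same nonexpansive map `T(s)`, so their
distance can only grow at a jump `αₖ`, and there by at most `‖ηₖ - ζₖ‖`. -/

theorem norm_sub_le_of_nonexpansive_recursion {V : Type*} [SeminormedAddCommGroup V]
    (S : ℕ → V → V) (hS : ∀ m u w, ‖S m u - S m w‖ ≤ ‖u - w‖) (η ζ X Y : ℕ → V)
    (hX : ∀ m, X (m + 1) = S m (X m) + η (m + 1))
    (hY : ∀ m, Y (m + 1) = S m (Y m) + ζ (m + 1)) (m : ℕ) :
    ‖X m - Y m‖ ≤ ‖X 0 - Y 0‖ + ∑ k ∈ Finset.Icc 1 m, ‖η k - ζ k‖ := by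
  induction m with
  | zero => simp
  | succ m ih =>
    calc ‖X (m + 1) - Y (m + 1)‖
        = ‖(S m (X m) - S m (Y m)) + (η (m + 1) - ζ (m + 1))‖ := by
          rw [hX, hY]; abel_nf
      _ ≤ ‖S m (X m) - S m (Y m)‖ + ‖η (m + 1) - ζ (m + 1)‖ := norm_add_le _ _
      _ ≤ ‖X m - Y m‖ + ‖η (m + 1) - ζ (m + 1)‖ := by gcongr; exact hS _ _ _
      _ ≤ ‖X 0 - Y 0‖ + ∑ k ∈ Finset.Icc 1 m, ‖η k - ζ k‖ + ‖η (m + 1) - ζ (m + 1)‖ := by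
          gcongr
      _ = ‖X 0 - Y 0‖ + ∑ k ∈ Finset.Icc 1 (m + 1), ‖η k - ζ k‖ := by
          rw [Finset.sum_Icc_succ_top (by omega)]; ring

theorem exists_mem_Ico_of_tendsto_atTop {β : Type*} [LinearOrder β] [NoMaxOrder β] {α : ℕ → β}
    (htop : Tendsto α atTop atTop) {t : β} (ht : α 0 ≤ t) :
    ∃ m, t ∈ Set.Ico (α m) (α (m + 1)) := by
  have hex : ∃ n, t < α n := (htop.eventually_gt_atTop t).exists
  obtain ⟨m, hm⟩ : ∃ m, Nat.find hex = m + 1 :=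
    Nat.exists_eq_add_one.mpr <| Nat.pos_of_ne_zero fun h => by
      have := Nat.find_spec hex
      rw [h] at this
      exact (this.trans_le ht).false
  exact ⟨m, not_lt.mp (Nat.find_min hex (by omega)), hm ▸ Nat.find_spec hex⟩

theorem Monotone.le_iff_le_of_mem_Ico {β : Type*} [Preorder β] {α : ℕ → β} (hα : Monotone α)
    {t : β} {m : ℕ} (ht : t ∈ Set.Ico (α m) (α (m + 1))) (k : ℕ) : α k ≤ t ↔ k ≤ m := by
  refine ⟨fun hk => ?_, fun hk => (hα hk).trans ht.1⟩
  by_contra! hmk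
  exact (hα hmk).not_gt (hk.trans_lt ht.2)

theorem stmt_12_general (V : Type*) [NormedAddCommGroup V]
    (T : ℝ → V → V)
    (hcontr : ∀ t ≥ (0:ℝ), ∀ u w : V, ‖T t u - T t w‖ ≤ ‖u - w‖)
    (α : ℕ → ℝ) (hα0 : α 0 = 0) (hmono : StrictMono α)
    (htop : Tendsto α atTop atTop)
    (x y : V) (η ζ : ℕ → V) (X Y : ℕ → V)
    (hX0 : X 0 = x) (hY0 : Y 0 = y)
    (hX : ∀ m : ℕ, X (m+1) = T (α (m+1) - α m) (X m) + η (m+1))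
    (hY : ∀ m : ℕ, Y (m+1) = T (α (m+1) - α m) (Y m) + ζ (m+1))
    (𝕏 𝕐 : ℝ → V)
    (h𝕏 : ∀ m : ℕ, ∀ t ∈ Set.Ico (α m) (α (m+1)), 𝕏 t = T (t - α m) (X m))
    (h𝕐 : ∀ m : ℕ, ∀ t ∈ Set.Ico (α m) (α (m+1)), 𝕐 t = T (t - α m) (Y m)) :
    ∀ t ≥ (0:ℝ), ∃ F : Finset ℕ, (∀ k : ℕ, k ∈ F ↔ 1 ≤ k ∧ α k ≤ t) ∧
      ‖𝕏 t - 𝕐 t‖ ≤ ‖x - y‖ + ∑ k ∈ F, ‖η k - ζ k‖ := by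
  intro t ht
  obtain ⟨m, hm⟩ := exists_mem_Ico_of_tendsto_atTop htop (hα0 ▸ ht)
  refine ⟨Finset.Icc 1 m, fun k => ?_, ?_⟩
  · rw [Finset.mem_Icc, hmono.monotone.le_iff_le_of_mem_Ico hm]
  have hstep : ∀ m u w, ‖T (α (m + 1) - α m) u - T (α (m + 1) - α m) w‖ ≤ ‖u - w‖ :=
    fun m => hcontr _ (sub_nonneg.mpr (hmono.monotone m.le_succ))
  rw [h𝕏 m t hm, h𝕐 m t hm, ← hX0, ← hY0]
  calc ‖T (t - α m) (X m) - T (t - α m) (Y m)‖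
      ≤ ‖X m - Y m‖ := hcontr _ (sub_nonneg.mpr hm.1) _ _
    _ ≤ _ := norm_sub_le_of_nonexpansive_recursion _ hstep η ζ X Y hX hY m

/-- For the piecewise semigroup processes `𝕏, 𝕐` generated by `(x,(ηₖ))` and `(y,(ζₖ))`
under a contraction semigroup `T`, one has for every `t ≥ 0`:
`‖𝕏(t) − 𝕐(t)‖ ≤ ‖x − y‖ + Σ_{k : αₖ ≤ t} ‖ηₖ − ζₖ‖`, the sum being finite. -/
theorem stmt_12 (V : Type*) [NormedAddCommGroup V]
    (T : ℝ → V → V)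
    (hcontr : ∀ t ≥ (0:ℝ), ∀ u w : V, ‖T t u - T t w‖ ≤ ‖u - w‖)
    (hT0 : ∀ u, T 0 u = u)
    (hsem : ∀ s ≥ (0:ℝ), ∀ t ≥ (0:ℝ), ∀ u, T (s + t) u = T t (T s u))
    (α : ℕ → ℝ) (hα0 : α 0 = 0) (hmono : StrictMono α)
    (htop : Tendsto α atTop atTop)
    (x y : V) (η ζ : ℕ → V) (X Y : ℕ → V)
    (hX0 : X 0 = x) (hY0 : Y 0 = y)
    (hX : ∀ m : ℕ, X (m+1) = T (α (m+1) - α m) (X m) + η (m+1))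
    (hY : ∀ m : ℕ, Y (m+1) = T (α (m+1) - α m) (Y m) + ζ (m+1))
    (𝕏 𝕐 : ℝ → V)
    (h𝕏 : ∀ m : ℕ, ∀ t ∈ Set.Ico (α m) (α (m+1)), 𝕏 t = T (t - α m) (X m))
    (h𝕐 : ∀ m : ℕ, ∀ t ∈ Set.Ico (α m) (α (m+1)), 𝕐 t = T (t - α m) (Y m)) :
    ∀ t ≥ (0:ℝ), ∃ F : Finset ℕ, (∀ k : ℕ, k ∈ F ↔ 1 ≤ k ∧ α k ≤ t) ∧
      ‖𝕏 t - 𝕐 t‖ ≤ ‖x - y‖ + ∑ k ∈ F, ‖η k - ζ k‖ :=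
  stmt_12_general V T hcontr α hα0 hmono htop x y η ζ X Y hX0 hY0 hX hY 𝕏 𝕐 h𝕏 h𝕐
end
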